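/- arXiv:1401.6060 — 5 statements merged into one kernel-verified Lean document; each statement's English description precedes it below -/
import Mathlib

section
/- Let a, b, c, d be nonnegative real numbers with a + b ≤ c ≤ d. Then every point (R1, R2) with 0 ≤ R1 ≤ a, 0 ≤ R2 ≤ c, and R1 + R2 ≤ a + b is componentwise dominated by some convex combination of the two points (a, b) and (0, d). -/
theorem superposition_region_trapezoid_general (a b c d : ℝ)
    (habc : a + b ≤ c) (hcd : c ≤ d)
    (R1 R2 : ℝ) (hR1 : 0 ≤ R1) (hR1' : R1 ≤ a)
    (hsum : R1 + R2 ≤ a + b) :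
    ∃ l : ℝ, 0 ≤ l ∧ l ≤ 1 ∧
      R1 ≤ l * a + (1 - l) * 0 ∧
      R2 ≤ l * b + (1 - l) * d := by
  have ha : 0 ≤ a := hR1.trans hR1'
  set l := R1 / a
  -- `R1 / a` is junk at `a = 0`, but then `R1 = 0` too.
  have hl_mul : l * a = R1 := div_mul_cancel_of_imp fun h ↦ le_antisymm (h ▸ hR1') hR1
  have hl_le : l ≤ 1 := div_le_one_of_le₀ hR1' ha
  refine ⟨l, div_nonneg hR1 ha, hl_le, by rw [mul_zero, add_zero, hl_mul], ?_⟩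
  -- Since `a + b ≤ d`, the chord from `(a, b)` to `(0, d)` lies above the line `R1 + R2 = a + b`.
  calc R2 ≤ l * b + (1 - l) * (a + b) := by linarith
    _ ≤ l * b + (1 - l) * d := by gcongr; linarith

/-- Right-trapezoid case of Proposition 1 (Equivalent Superposition Region): when
`a + b ≤ c ≤ d`, every point of the region is componentwise dominated by a convex
combination of the points `(a, b)` and `(0, d)`. -/
theorem superposition_region_trapezoid (a b c d : ℝ)
    (ha : 0 ≤ a) (hb : 0 ≤ b) (hc : 0 ≤ c) (hd : 0 ≤ d)
    (habc : a + b ≤ c) (hcd : c ≤ d)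
    (R1 R2 : ℝ) (hR1 : 0 ≤ R1) (hR1' : R1 ≤ a) (hR2 : 0 ≤ R2) (hR2' : R2 ≤ c)
    (hsum : R1 + R2 ≤ a + b) :
    ∃ l : ℝ, 0 ≤ l ∧ l ≤ 1 ∧
      R1 ≤ l * a + (1 - l) * 0 ∧
      R2 ≤ l * b + (1 - l) * d :=
  superposition_region_trapezoid_general a b c d habc hcd R1 R2 hR1 hR1' hsum
end

section
/- Let a0, b0, a1, b2, t be nonnegative real numbers with a0 ≤ b0, t < b2, and b0 + t < a0 + a1. Then every point (R1, R2) with 0 ≤ R1 ≤ a0 + a1, 0 ≤ R2 ≤ b0 + b2, and R1 + R2 ≤ a0 + a1 + b2 − t is componentwise dominated by some convex combination of the two corner points (a0 + a1, b2 − t) and (a0 + a1 − t − b0, b0 + b2). -/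
theorem exists_convexCombination_ge_of_add_eq {p₁ p₂ q₁ q₂ s x y : ℝ}
    (hp : p₁ + p₂ = s) (hq : q₁ + q₂ = s) (hx : x ≤ p₁) (hy : y ≤ q₂) (hxy : x + y ≤ s) :
    ∃ l : ℝ, 0 ≤ l ∧ l ≤ 1 ∧ x ≤ l * p₁ + (1 - l) * q₁ ∧ y ≤ l * p₂ + (1 - l) * q₂ := by
  rcases le_or_gt x q₁ with hxq | hqx
  · exact ⟨0, le_rfl, zero_le_one, by simpa using hxq, by simpa using hy⟩
  · have hpq : 0 < p₁ - q₁ := by linarith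
    set l := (x - q₁) / (p₁ - q₁)
    have hfst : l * p₁ + (1 - l) * q₁ = x := by
      simp only [l]
      field_simp
      ring
    have hsnd : l * p₂ + (1 - l) * q₂ = s - (l * p₁ + (1 - l) * q₁) := by
      linear_combination l * hp + (1 - l) * hq
    refine ⟨l, div_nonneg (by linarith) hpq.le, (div_le_one hpq).2 (by linarith), hfst.ge, ?_⟩
    linarith

theorem marton_region_pentagon_general (a0 b0 a1 b2 t : ℝ)
    (R1 R2 : ℝ) (hR1' : R1 ≤ a0 + a1) (hR2' : R2 ≤ b0 + b2)
    (hsum : R1 + R2 ≤ a0 + a1 + b2 - t) :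
    ∃ l : ℝ, 0 ≤ l ∧ l ≤ 1 ∧
      R1 ≤ l * (a0 + a1) + (1 - l) * (a0 + a1 - t - b0) ∧
      R2 ≤ l * (b2 - t) + (1 - l) * (b0 + b2) :=
  exists_convexCombination_ge_of_add_eq (by ring) (by ring) hR1' hR2' hsum

/-- Pentagon case of Proposition 3 (Equivalent Marton's Region): under `a0 ≤ b0`, `t < b2`,
and `b0 + t < a0 + a1`, every point of the region is componentwise dominated by a convex
combination of the corner points `(a0 + a1, b2 - t)` and `(a0 + a1 - t - b0, b0 + b2)`. -/
theorem marton_region_pentagon (a0 b0 a1 b2 t : ℝ)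
    (ha0 : 0 ≤ a0) (hb0 : 0 ≤ b0) (ha1 : 0 ≤ a1) (hb2 : 0 ≤ b2) (ht : 0 ≤ t)
    (ha0b0 : a0 ≤ b0) (htb2 : t < b2) (hcorner : b0 + t < a0 + a1)
    (R1 R2 : ℝ) (hR1 : 0 ≤ R1) (hR1' : R1 ≤ a0 + a1) (hR2 : 0 ≤ R2) (hR2' : R2 ≤ b0 + b2)
    (hsum : R1 + R2 ≤ a0 + a1 + b2 - t) :
    ∃ l : ℝ, 0 ≤ l ∧ l ≤ 1 ∧
      R1 ≤ l * (a0 + a1) + (1 - l) * (a0 + a1 - t - b0) ∧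
      R2 ≤ l * (b2 - t) + (1 - l) * (b0 + b2) :=
  marton_region_pentagon_general a0 b0 a1 b2 t R1 R2 hR1' hR2' hsum
end

section
/- For each natural number n, let H_n, L_n, H'_n, L'_n, M_n be finite subsets of {0, 1, …, n−1} such that H'_n ⊆ H_n, L_n ⊆ L'_n, L_n ⊆ M_n, H_n ∩ L_n = ∅, and H'_n ∩ L'_n = ∅. Suppose that, as n → ∞, |{0,…,n−1} \ (H_n ∪ L_n)|/n → 0, |{0,…,n−1} \ (H'_n ∪ L'_n)|/n → 0, |L'_n|/n → 1 − h', and |M_n|/n → 1 − g. Then (|H'_n ∩ M_n| − |(H'_n)ᶜ ∩ (L_n)ᶜ ∩ (M_n)ᶜ|)/n → h' − g, where complements are taken within {0,…,n−1}. -/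
/-!
Since `L_n ⊆ M_n`, the critical frozen set is the complement of `H'_n ∪ M_n`, so by
inclusion–exclusion the numerator equals `|H'_n| + |M_n| - n`. As `H'_n` and `L'_n` are disjoint
and leave a vanishing fraction of `{0,…,n-1}` uncovered, `|H'_n|/n → 1 - (1 - h') = h'`, and the
limit is `h' + (1 - g) - 1 = h' - g`.
-/

open Filter Finset Topology

namespace Finset

variable {α : Type*} [DecidableEq α] {U s t l m : Finset α}

theorem sdiff_inter_sdiff_inter_sdiff_of_subset (hlm : l ⊆ m) :
    (U \ s) ∩ (U \ l) ∩ (U \ m) = U \ (s ∪ m) := by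
  rw [inter_assoc, inter_eq_right.mpr (sdiff_subset_sdiff subset_rfl hlm), sdiff_union_distrib]

theorem card_sdiff_union_add_card_add_card_of_disjoint (hs : s ⊆ U) (ht : t ⊆ U)
    (hst : Disjoint s t) : #(U \ (s ∪ t)) + #s + #t = #U := by
  rw [add_assoc, ← card_union_of_disjoint hst, card_sdiff_add_card_eq_card (union_subset hs ht)]

theorem card_inter_add_card_eq_card_add_card_add_card_sdiff_union (hs : s ⊆ U) (ht : t ⊆ U) :
    #(s ∩ t) + #U = #s + #t + #(U \ (s ∪ t)) := by
  rw [← card_sdiff_add_card_eq_card (union_subset hs ht), ← card_union_add_card_inter s t]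
  ring

end Finset

theorem tendsto_card_div_of_disjoint {s t : ℕ → Finset ℕ} {β : ℝ}
    (hs : ∀ n, s n ⊆ range n) (ht : ∀ n, t n ⊆ range n) (hst : ∀ n, Disjoint (s n) (t n))
    (hrest : Tendsto (fun n => (#(range n \ (s n ∪ t n)) : ℝ) / n) atTop (𝓝 0))
    (htβ : Tendsto (fun n => (#(t n) : ℝ) / n) atTop (𝓝 β)) :
    Tendsto (fun n => (#(s n) : ℝ) / n) atTop (𝓝 (1 - β)) := by
  have hlim := (tendsto_const_nhds (x := (1 : ℝ))).sub htβ |>.sub hrest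
  rw [sub_zero] at hlim
  refine hlim.congr' ((eventually_ne_atTop 0).mono fun n hn => ?_)
  have hcard : (#(range n \ (s n ∪ t n)) : ℝ) + #(s n) + #(t n) = n := by
    exact_mod_cast card_range n ▸
      card_sdiff_union_add_card_add_card_of_disjoint (hs n) (ht n) (hst n)
  field_simp
  linarith

theorem tendsto_card_inter_sub_card_sdiff_union_div {s t : ℕ → Finset ℕ} {σ τ : ℝ}
    (hs : ∀ n, s n ⊆ range n) (ht : ∀ n, t n ⊆ range n)
    (hsσ : Tendsto (fun n => (#(s n) : ℝ) / n) atTop (𝓝 σ))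
    (htτ : Tendsto (fun n => (#(t n) : ℝ) / n) atTop (𝓝 τ)) :
    Tendsto (fun n => ((#(s n ∩ t n) : ℝ) - #(range n \ (s n ∪ t n))) / n) atTop
      (𝓝 (σ + τ - 1)) := by
  refine (hsσ.add htτ |>.sub_const 1).congr' ((eventually_ne_atTop 0).mono fun n hn => ?_)
  have hcard : (#(s n ∩ t n) : ℝ) + n = #(s n) + #(t n) + #(range n \ (s n ∪ t n)) := by
    exact_mod_cast card_range n ▸
      card_inter_add_card_eq_card_add_card_add_card_sdiff_union (hs n) (ht n)
  field_simp
  linarith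

theorem binning_rate_computation_general (L H' L' M : ℕ → Finset ℕ) (h' g : ℝ)
    (hH'sub : ∀ n, H' n ⊆ Finset.range n)
    (hL'sub : ∀ n, L' n ⊆ Finset.range n)
    (hMsub : ∀ n, M n ⊆ Finset.range n)
    (hLM : ∀ n, L n ⊆ M n)
    (hH'L' : ∀ n, H' n ∩ L' n = ∅)
    (hrest' : Tendsto (fun n => ((Finset.range n \ (H' n ∪ L' n)).card : ℝ) / n) atTop (nhds 0))
    (hL'lim : Tendsto (fun n => ((L' n).card : ℝ) / n) atTop (nhds (1 - h')))
    (hMlim : Tendsto (fun n => ((M n).card : ℝ) / n) atTop (nhds (1 - g))) :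
    Tendsto (fun n => (((H' n ∩ M n).card : ℝ) -
        (((Finset.range n \ H' n) ∩ (Finset.range n \ L n) ∩ (Finset.range n \ M n)).card : ℝ)) / n)
      atTop (nhds (h' - g)) := by
  have hH'lim := tendsto_card_div_of_disjoint hH'sub hL'sub
    (fun n => disjoint_iff_inter_eq_empty.mpr (hH'L' n)) hrest' hL'lim
  rw [sub_sub_cancel] at hH'lim
  simp only [sdiff_inter_sdiff_inter_sdiff_of_subset (hLM _)]
  convert tendsto_card_inter_sub_card_sdiff_union_div hH'sub hMsub hH'lim hMlim using 2
  ring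

/-- Equation (eq:rate2): the rate computation for the second user of the polar binning
scheme. With complements taken within `{0,…,n-1}`, the normalized difference between the
information set `H'_n ∩ M_n` and the critical frozen set `(H'_n)ᶜ ∩ (L_n)ᶜ ∩ (M_n)ᶜ`
tends to `h' - g`. -/
theorem binning_rate_computation (H L H' L' M : ℕ → Finset ℕ) (h' g : ℝ)
    (hHsub : ∀ n, H n ⊆ Finset.range n)
    (hLsub : ∀ n, L n ⊆ Finset.range n)
    (hH'sub : ∀ n, H' n ⊆ Finset.range n)
    (hL'sub : ∀ n, L' n ⊆ Finset.range n)
    (hMsub : ∀ n, M n ⊆ Finset.range n)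
    (hH'H : ∀ n, H' n ⊆ H n)
    (hLL' : ∀ n, L n ⊆ L' n)
    (hLM : ∀ n, L n ⊆ M n)
    (hHL : ∀ n, H n ∩ L n = ∅)
    (hH'L' : ∀ n, H' n ∩ L' n = ∅)
    (hrest : Tendsto (fun n => ((Finset.range n \ (H n ∪ L n)).card : ℝ) / n) atTop (nhds 0))
    (hrest' : Tendsto (fun n => ((Finset.range n \ (H' n ∪ L' n)).card : ℝ) / n) atTop (nhds 0))
    (hL'lim : Tendsto (fun n => ((L' n).card : ℝ) / n) atTop (nhds (1 - h')))
    (hMlim : Tendsto (fun n => ((M n).card : ℝ) / n) atTop (nhds (1 - g))) :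
    Tendsto (fun n => (((H' n ∩ M n).card : ℝ) -
        (((Finset.range n \ H' n) ∩ (Finset.range n \ L n) ∩ (Finset.range n \ M n)).card : ℝ)) / n)
      atTop (nhds (h' - g)) :=
  binning_rate_computation_general L H' L' M h' g hH'sub hL'sub hMsub hLM hH'L' hrest' hL'lim hMlim
end

section
/- Let V and W be finite sets, let q : {0,1} × V → ℝ be a nonnegative function (the joint probability mass function of a binary T and V), and let k : V × W → ℝ be a nonnegative function with Σ_{w∈W} k(v,w) = 1 for every v ∈ V (a channel from V to W). Define the joint pmf p(t,v,w) = q(t,v) · k(v,w), so that T − V − W forms a Markov chain. Then Z(T|W) ≥ Z(T|V), where Z(T|V) = 2 Σ_{v} √(q(0,v) · q(1,v)) and Z(T|W) = 2 Σ_{w} √((Σ_{v} p(0,v,w)) · (Σ_{v} p(1,v,w))). -/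
/-!
For each output `w`, Cauchy–Schwarz applied to the vectors `√(q(0,v) k(v,w))` and
`√(q(1,v) k(v,w))` bounds the channel-weighted sum `∑ᵥ √(q(0,v) q(1,v)) k(v,w)` by the
`w`-term of `Z(T|W)`. Summing over `w` and using that every row of `k` sums to one gives `Z(T|V)`.
-/

open Finset

lemma Real.sqrt_mul_mul_sqrt_mul_mul {a b c : ℝ} (ha : 0 ≤ a) (hc : 0 ≤ c) :
    √(a * c) * √(b * c) = √(a * b) * c := by
  rw [← Real.sqrt_mul (mul_nonneg ha hc), mul_mul_mul_comm, Real.sqrt_mul' _ (mul_self_nonneg c),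
    Real.sqrt_mul_self hc]

lemma Real.sum_sqrt_mul_mul_le {ι : Type*} (s : Finset ι) {f g c : ι → ℝ}
    (hf : ∀ i, 0 ≤ f i) (hg : ∀ i, 0 ≤ g i) (hc : ∀ i, 0 ≤ c i) :
    ∑ i ∈ s, √(f i * g i) * c i ≤ √((∑ i ∈ s, f i * c i) * ∑ i ∈ s, g i * c i) := by
  calc ∑ i ∈ s, √(f i * g i) * c i
      = ∑ i ∈ s, √(f i * c i) * √(g i * c i) :=
        sum_congr rfl fun i _ => (Real.sqrt_mul_mul_sqrt_mul_mul (hf i) (hc i)).symm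
    _ ≤ √(∑ i ∈ s, f i * c i) * √(∑ i ∈ s, g i * c i) :=
        Real.sum_sqrt_mul_sqrt_le s (fun i => mul_nonneg (hf i) (hc i))
          (fun i => mul_nonneg (hg i) (hc i))
    _ = √((∑ i ∈ s, f i * c i) * ∑ i ∈ s, g i * c i) :=
        (Real.sqrt_mul (sum_nonneg fun i _ => mul_nonneg (hf i) (hc i)) _).symm

lemma sum_eq_sum_sum_mul_of_sum_eq_one {V W : Type*} [Fintype V] [Fintype W]
    (a : V → ℝ) {k : V × W → ℝ} (hrow : ∀ v : V, ∑ w : W, k (v, w) = 1) :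
    ∑ v, a v = ∑ w, ∑ v, a v * k (v, w) := by
  rw [sum_comm]
  simp only [← mul_sum, hrow, mul_one]

/-- Data-processing inequality for the Bhattacharyya parameter: if `T - V - W` is a Markov
chain where `W` is obtained from `V` through a channel `k`, then `Z(T|W) ≥ Z(T|V)`. -/
theorem bhattacharyya_data_processing {V W : Type*} [Fintype V] [Fintype W]
    (q : Bool × V → ℝ) (k : V × W → ℝ)
    (hq : ∀ x, 0 ≤ q x) (hk : ∀ x, 0 ≤ k x)
    (hrow : ∀ v : V, ∑ w : W, k (v, w) = 1) :
    2 * ∑ w : W, Real.sqrt ((∑ v : V, q (false, v) * k (v, w)) * (∑ v : V, q (true, v) * k (v, w))) ≥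
      2 * ∑ v : V, Real.sqrt (q (false, v) * q (true, v)) := by
  rw [ge_iff_le, sum_eq_sum_sum_mul_of_sum_eq_one _ hrow]
  gcongr with w
  exact Real.sum_sqrt_mul_mul_le univ (fun v => hq _) (fun v => hq _) (fun v => hk _)
end

section
/- Let n be a natural number, Y a finite set, and p a probability mass function on ({0,1}^n) × Y; let (U^{1:n}, Y) be distributed according to p. For each i ∈ {1,…,n}, let û_i be any function mapping a past (u^{1:i−1}, y) to a maximizer over u ∈ {0,1} of P(U^i = u, U^{1:i−1} = u^{1:i−1}, Y = y). Then the genie-aided successive-cancellation error probability satisfies P(∃ i ∈ {1,…,n} : û_i(U^{1:i−1}, Y) ≠ U^i) ≤ (1/2) Σ_{i=1}^{n} Z(U^i | U^{1:i−1}, Y), where Z(U^i | U^{1:i−1}, Y) = 2 Σ_{u^{1:i−1}, y} √(P(U^i=0, U^{1:i−1}=u^{1:i−1}, Y=y) · P(U^i=1, U^{1:i−1}=u^{1:i−1}, Y=y)). -/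
/-!
Union bound over the successive decisions, each made with the true past. Grouping the
configurations by the past `w` and the observation `y`, decision `i` errs with probability
`P(U^i = !û_i(w, y), w, y)`, the smaller of the two values of `u ↦ P(U^i = u, w, y)`; and the
smaller of two nonnegative numbers is at most the square root of their product.
-/

/-- `scProb p i u w y` is the joint probability `P(U^i = u, U^{1:i-1} = w, Y = y)` under the
joint pmf `p` on `{0,1}^n × Y`, where `w` prescribes the coordinates before `i`. -/
def scProb {n : ℕ} {Y : Type*} [Fintype Y] (p : (Fin n → Bool) × Y → ℝ)
    (i : Fin n) (u : Bool) (w : Fin i → Bool) (y : Y) : ℝ :=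
  ∑ x : Fin n → Bool,
    if x i = u ∧ (∀ j : Fin i, x (Fin.castLE i.isLt.le j) = w j) then p (x, y) else 0

/-- `scZ p i` is the Bhattacharyya parameter `Z(U^i | U^{1:i-1}, Y)` of the bit `U^i` given
the past `U^{1:i-1}` and the observation `Y`:
`Z(U^i | U^{1:i-1}, Y) = 2 Σ_{w, y} √(P(U^i=0, U^{1:i-1}=w, Y=y) · P(U^i=1, U^{1:i-1}=w, Y=y))`. -/
noncomputable def scZ {n : ℕ} {Y : Type*} [Fintype Y] (p : (Fin n → Bool) × Y → ℝ) (i : Fin n) : ℝ :=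
  2 * ∑ w : Fin i → Bool, ∑ y : Y,
    Real.sqrt (scProb p i false w y * scProb p i true w y)

open Finset

lemma ite_exists_le_sum_ite {ι : Type*} [Fintype ι] (P : ι → Prop) [DecidablePred P]
    [Decidable (∃ i, P i)] {a : ℝ} (ha : 0 ≤ a) :
    (if ∃ i, P i then a else 0) ≤ ∑ i, if P i then a else 0 := by
  split_ifs with h
  · obtain ⟨i, hi⟩ := h
    calc a = if P i then a else 0 := (if_pos hi).symm
      _ ≤ ∑ i, if P i then a else 0 :=
        single_le_sum (f := fun j => if P j then a else 0)
          (fun j _ => by split_ifs <;> simp [ha]) (mem_univ i)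
  · exact sum_nonneg fun i _ => by split_ifs <;> simp [ha]

lemma le_sqrt_mul_of_le {a b : ℝ} (ha : 0 ≤ a) (hab : a ≤ b) : a ≤ √(a * b) :=
  Real.le_sqrt_of_sq_le (by nlinarith)

lemma apply_not_le_sqrt_mul {f : Bool → ℝ} (hf : ∀ u, 0 ≤ f u) {b : Bool}
    (hb : ∀ u, f u ≤ f b) : f (!b) ≤ √(f false * f true) := by
  have h := le_sqrt_mul_of_le (hf (!b)) (hb (!b))
  cases b
  · simpa [mul_comm] using h
  · simpa using h

section SuccessiveCancellation

variable {n : ℕ} {Y : Type*} [Fintype Y] (p : (Fin n → Bool) × Y → ℝ)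

lemma scProb_nonneg (hp : ∀ x, 0 ≤ p x) (i : Fin n) (u : Bool) (w : Fin i → Bool) (y : Y) :
    0 ≤ scProb p i u w y :=
  sum_nonneg fun x _ => by split_ifs <;> simp [hp]

lemma sum_scProb_eq_sum_ite (i : Fin n) (F : (Fin i → Bool) → Bool) (y : Y) :
    ∑ w, scProb p i (F w) w y =
      ∑ x : Fin n → Bool,
        if x i = F (fun j => x (Fin.castLE i.isLt.le j)) then p (x, y) else 0 := by
  unfold scProb
  rw [sum_comm]
  refine sum_congr rfl fun x _ => ?_
  have hpast : ∀ w : Fin i → Bool, (∀ j, x (Fin.castLE i.isLt.le j) = w j) ↔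
      (fun j => x (Fin.castLE i.isLt.le j)) = w := fun w => funext_iff.symm
  simp only [hpast, and_comm (a := x i = _), ite_and, sum_ite_eq, mem_univ, if_true]

lemma sum_bit_error_le_half_scZ (hp : ∀ x, 0 ≤ p x) (i : Fin n)
    (uhat : (Fin i → Bool) → Y → Bool)
    (hmax : ∀ w y u, scProb p i u w y ≤ scProb p i (uhat w y) w y) :
    ∑ x : Fin n → Bool, ∑ y : Y,
        (if uhat (fun j => x (Fin.castLE i.isLt.le j)) y ≠ x i then p (x, y) else 0) ≤
      scZ p i / 2 := by
  have herror : ∀ y : Y, ∑ x : Fin n → Bool,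
      (if uhat (fun j => x (Fin.castLE i.isLt.le j)) y ≠ x i then p (x, y) else 0) =
        ∑ w, scProb p i (!uhat w y) w y := fun y => by
    simp only [sum_scProb_eq_sum_ite, Bool.eq_not, ne_comm]
  calc ∑ x : Fin n → Bool, ∑ y : Y,
        (if uhat (fun j => x (Fin.castLE i.isLt.le j)) y ≠ x i then p (x, y) else 0)
      = ∑ y, ∑ w, scProb p i (!uhat w y) w y := by
        rw [sum_comm]
        exact sum_congr rfl fun y _ => herror y
    _ ≤ ∑ y, ∑ w, √(scProb p i false w y * scProb p i true w y) :=
        sum_le_sum fun y _ => sum_le_sum fun w _ =>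
          apply_not_le_sqrt_mul (scProb_nonneg p hp i · w y) (hmax w y)
    _ = scZ p i / 2 := by
        rw [scZ, sum_comm]
        ring

end SuccessiveCancellation

theorem sc_error_le_sum_bhattacharyya_general {n : ℕ} {Y : Type*} [Fintype Y]
    (p : (Fin n → Bool) × Y → ℝ) (hp : ∀ x, 0 ≤ p x)
    (uhat : (i : Fin n) → (Fin i → Bool) → Y → Bool)
    (hmax : ∀ (i : Fin n) (w : Fin i → Bool) (y : Y) (u : Bool),
      scProb p i u w y ≤ scProb p i (uhat i w y) w y) :
    ∑ x : Fin n → Bool, ∑ y : Y,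
        (if ∃ i : Fin n, uhat i (fun j => x (Fin.castLE i.isLt.le j)) y ≠ x i
          then p (x, y) else 0) ≤
      (1 / 2) * ∑ i : Fin n, scZ p i := by
  calc _ ≤ ∑ x : Fin n → Bool, ∑ y : Y, ∑ i : Fin n,
          (if uhat i (fun j => x (Fin.castLE i.isLt.le j)) y ≠ x i then p (x, y) else 0) :=
        sum_le_sum fun x _ => sum_le_sum fun y _ => ite_exists_le_sum_ite _ (hp _)
    _ = ∑ i : Fin n, ∑ x : Fin n → Bool, ∑ y : Y,
          (if uhat i (fun j => x (Fin.castLE i.isLt.le j)) y ≠ x i then p (x, y) else 0) :=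
        (sum_congr rfl fun x _ => sum_comm).trans sum_comm
    _ ≤ ∑ i : Fin n, scZ p i / 2 :=
        sum_le_sum fun i _ => sum_bit_error_le_half_scZ p hp i (uhat i) (hmax i)
    _ = (1 / 2) * ∑ i : Fin n, scZ p i := by
        rw [← sum_div]
        ring

/-- Genie-aided successive-cancellation union bound: if each `û_i` is a maximizer of
`u ↦ P(U^i = u, U^{1:i-1} = w, Y = y)`, then the probability that some successive MAP
decision (applied with the true past) is wrong is at most `(1/2) Σ_i Z(U^i | U^{1:i-1}, Y)`. -/
theorem sc_error_le_sum_bhattacharyya {n : ℕ} {Y : Type*} [Fintype Y]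
    (p : (Fin n → Bool) × Y → ℝ) (hp : ∀ x, 0 ≤ p x)
    (hsum : ∑ x : (Fin n → Bool) × Y, p x = 1)
    (uhat : (i : Fin n) → (Fin i → Bool) → Y → Bool)
    (hmax : ∀ (i : Fin n) (w : Fin i → Bool) (y : Y) (u : Bool),
      scProb p i u w y ≤ scProb p i (uhat i w y) w y) :
    ∑ x : Fin n → Bool, ∑ y : Y,
        (if ∃ i : Fin n, uhat i (fun j => x (Fin.castLE i.isLt.le j)) y ≠ x i
          then p (x, y) else 0) ≤
      (1 / 2) * ∑ i : Fin n, scZ p i :=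
  sc_error_le_sum_bhattacharyya_general p hp uhat hmax
end
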